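/- Let G be a finite abelian group of rank r with invariant factors n_1,…,n_r, and let K be a nontrivial cyclic subgroup of G. Then d*(G) ≥ d*(G/K) + |K| − 1. Moreover, equality holds only if the rank of G/K equals r − 1 and G/K is isomorphic to the direct sum ⊕_{i ∈ {1,…,r}\{j}} C_{n_i} for some j ∈ {1,…,r}. -/

import Mathlib

/-!
Write `N(d) = [G : dG]` and `M(d) = [G/K : d(G/K)]`. For `G ≅ ⊕ C_{n_i}` one has
`N(d) = ∏ gcd(n_i, d)`, so `N(p^(s+1)) = p^c N(p^s)` where `c` counts the `n_i` divisible by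
`p^(s+1)`. Also `N(d) = [K : K ∩ dG] M(d)`, and since `K` is cyclic, passing from `p^s` to
`p^(s+1)` multiplies `[K : K ∩ p^s G]` by `1` or `p`. Hence the counts for `G` and for `G/K`
differ by `0` or `1`, and as the invariant factors form divisor chains this is the interlacing
`m_i ∣ n_i`, `n_(i+1) ∣ m_i` (both sequences continued by `1`s).

With `a_i = n_i / m_i` we get `∏ a_i = |K|` and `∏_(j>i) a_j ≤ n_(i+1) ≤ m_i`, so by telescoping
`|K| - 1 = ∑ (a_i - 1) ∏_(j>i) a_j ≤ ∑ (a_i - 1) m_i = ∑ (n_i - m_i) = d*(G) - d*(G/K)`.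
In the case of equality let `j` be the first index with `a_j > 1`: then `m_i = n_i` for `i < j`,
and every later bound is tight, i.e. `m_i = n_(i+1)` for `i ≥ j`.
-/

open Finset

theorem Nat.gcd_prime_pow_succ {p : ℕ} (hp : p.Prime) (n s : ℕ) :
    n.gcd (p ^ (s + 1)) = (if p ^ (s + 1) ∣ n then p else 1) * n.gcd (p ^ s) := by
  split_ifs with h
  · rw [Nat.gcd_eq_right h, Nat.gcd_eq_right ((pow_dvd_pow p s.le_succ).trans h), pow_succ,
      mul_comm]
  · rw [one_mul]
    obtain ⟨j, hj, hgcd⟩ := (Nat.dvd_prime_pow hp).mp (Nat.gcd_dvd_right n (p ^ (s + 1)))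
    have hjs : j ≤ s := by
      by_contra! hsj
      exact h (by rw [show s + 1 = j by omega, ← hgcd]; exact Nat.gcd_dvd_left _ _)
    refine Nat.dvd_antisymm ?_ (Nat.gcd_dvd_gcd_of_dvd_right _ (pow_dvd_pow p s.le_succ))
    exact Nat.dvd_gcd (Nat.gcd_dvd_left _ _) (hgcd ▸ pow_dvd_pow p hjs)

theorem prod_gcd_prime_pow_succ {ι : Type*} (s : Finset ι) (f : ι → ℕ) {p : ℕ} (hp : p.Prime)
    (k : ℕ) : ∏ i ∈ s, (f i).gcd (p ^ (k + 1)) =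
      p ^ #{i ∈ s | p ^ (k + 1) ∣ f i} * ∏ i ∈ s, (f i).gcd (p ^ k) := by
  rw [prod_congr rfl fun i _ => Nat.gcd_prime_pow_succ hp (f i) k, prod_mul_distrib, prod_ite,
    prod_const, prod_const, one_pow, mul_one]

section Index

variable {G : Type*} [AddCommGroup G]

theorem AddEquiv.index_nsmulAddMonoidHom_range {H : Type*} [AddCommGroup H] (e : G ≃+ H)
    (d : ℕ) :
    (nsmulAddMonoidHom (α := G) d).range.index = (nsmulAddMonoidHom (α := H) d).range.index := by
  rw [← e.map_range_nsmulAddMonoidHom, AddSubgroup.index_map_equiv]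

theorem index_nsmulAddMonoidHom_range_pi_zmod {ι : Type*} [Fintype ι] (n : ι → ℕ)
    [∀ i, NeZero (n i)] (d : ℕ) :
    (nsmulAddMonoidHom (α := (i : ι) → ZMod (n i)) d).range.index = ∏ i, (n i).gcd d := by
  rw [AddSubgroup.index_eq_card,
    Nat.card_congr (QuotientAddGroup.addEquivPiModRangeNSMulAddMonoidHom _ d).toEquiv, Nat.card_pi]
  refine prod_congr rfl fun i _ => ?_
  rw [← AddSubgroup.index_eq_card, IsAddCyclic.index_nsmulAddMonoidHom_range, Nat.card_zmod]

theorem index_nsmulAddMonoidHom_range_eq_relIndex_mul (K : AddSubgroup G) (d : ℕ) :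
    (nsmulAddMonoidHom (α := G) d).range.index =
      (nsmulAddMonoidHom (α := G) d).range.relIndex K *
        (nsmulAddMonoidHom (α := G ⧸ K) d).range.index := by
  have hsurj := QuotientAddGroup.mk'_surjective K
  have hmap : (nsmulAddMonoidHom (α := G) d).range.map (QuotientAddGroup.mk' K) =
      (nsmulAddMonoidHom (α := G ⧸ K) d).range := by
    have hcomm : (QuotientAddGroup.mk' K).comp (nsmulAddMonoidHom d) =
        (nsmulAddMonoidHom d).comp (QuotientAddGroup.mk' K) := by ext; simp
    rw [AddMonoidHom.map_range, hcomm, AddMonoidHom.range_comp,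
      AddMonoidHom.range_eq_top.mpr hsurj, ← AddMonoidHom.range_eq_map]
  rw [← hmap, AddSubgroup.index_map, QuotientAddGroup.ker_mk', AddMonoidHom.range_eq_top.mpr hsurj,
    AddSubgroup.index_top, mul_one, ← AddSubgroup.relIndex_mul_index le_sup_left,
    AddSubgroup.relIndex_sup_left]

theorem relIndex_dvd_of_nsmul_mem {H S : AddSubgroup G} [IsAddCyclic S] [Finite S] {p : ℕ}
    (h : ∀ x ∈ S, p • x ∈ H) : H.relIndex S ∣ p := by
  have hle : (nsmulAddMonoidHom (α := S) p).range ≤ H.addSubgroupOf S := by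
    rintro _ ⟨x, rfl⟩
    exact AddSubgroup.mem_addSubgroupOf.mpr (h x x.2)
  calc H.relIndex S ∣ (nsmulAddMonoidHom (α := S) p).range.index := AddSubgroup.index_dvd_of_le hle
    _ = (Nat.card S).gcd p := IsAddCyclic.index_nsmulAddMonoidHom_range S p
    _ ∣ p := Nat.gcd_dvd_right _ _

theorem exists_dvd_relIndex_nsmul_pow_succ_eq (K : AddSubgroup G) [IsAddCyclic K] [Finite K]
    (p s : ℕ) : ∃ x, x ∣ p ∧ (nsmulAddMonoidHom (α := G) (p ^ (s + 1))).range.relIndex K =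
      x * (nsmulAddMonoidHom (α := G) (p ^ s)).range.relIndex K := by
  set A := (nsmulAddMonoidHom (α := G) (p ^ s)).range
  set B := (nsmulAddMonoidHom (α := G) (p ^ (s + 1))).range
  have hle : B ≤ A := by
    rintro _ ⟨y, rfl⟩
    exact ⟨p • y, by simp [smul_smul, pow_succ]⟩
  have : IsAddCyclic (A ⊓ K :) := AddSubgroup.isAddCyclic_of_le inf_le_right
  have : Finite (A ⊓ K :) := Finite.of_injective _ (AddSubgroup.inclusion_injective inf_le_right)
  have hdvd : B.relIndex (A ⊓ K) ∣ p := relIndex_dvd_of_nsmul_mem fun x hx => by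
    obtain ⟨y, hy⟩ := (AddSubgroup.mem_inf.mp hx).1
    exact ⟨y, by rw [← hy]; simp [smul_smul, pow_succ']⟩
  refine ⟨_, hdvd, ?_⟩
  rw [AddSubgroup.relIndex_inf_mul_relIndex, inf_of_le_left hle]

end Index

theorem card_filter_pow_dvd_le_of_quotient {G : Type*} [AddCommGroup G] {ι κ : Type*}
    [Fintype ι] [Fintype κ] {n : ι → ℕ} {m : κ → ℕ} [∀ i, NeZero (n i)] [∀ j, NeZero (m j)]
    {K : AddSubgroup G} [IsAddCyclic K] (e : G ≃+ ((i : ι) → ZMod (n i)))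
    (eQ : G ⧸ K ≃+ ((j : κ) → ZMod (m j))) {p : ℕ} (hp : p.Prime) (s : ℕ) :
    #{j | p ^ (s + 1) ∣ m j} ≤ #{i | p ^ (s + 1) ∣ n i} ∧
      #{i | p ^ (s + 1) ∣ n i} ≤ #{j | p ^ (s + 1) ∣ m j} + 1 := by
  have : Finite G := .of_equiv _ e.symm.toEquiv
  have hG (d : ℕ) : (nsmulAddMonoidHom (α := G) d).range.index = ∏ i, (n i).gcd d :=
    (e.index_nsmulAddMonoidHom_range d).trans (index_nsmulAddMonoidHom_range_pi_zmod n d)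
  have hQ (d : ℕ) : (nsmulAddMonoidHom (α := G ⧸ K) d).range.index = ∏ j, (m j).gcd d :=
    (eQ.index_nsmulAddMonoidHom_range d).trans (index_nsmulAddMonoidHom_range_pi_zmod m d)
  obtain ⟨x, hxp, hJ⟩ := exists_dvd_relIndex_nsmul_pow_succ_eq K p s
  have h0 := index_nsmulAddMonoidHom_range_eq_relIndex_mul K (p ^ s)
  have h1 := index_nsmulAddMonoidHom_range_eq_relIndex_mul K (p ^ (s + 1))
  rw [hG, hQ] at h0
  rw [hG, hQ, hJ, prod_gcd_prime_pow_succ _ _ hp, prod_gcd_prime_pow_succ _ _ hp, h0] at h1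
  have hpos : 0 < ∏ i, (n i).gcd (p ^ s) :=
    prod_pos fun i _ => Nat.gcd_pos_of_pos_right _ (pow_pos hp.pos s)
  have hpow : p ^ #{i | p ^ (s + 1) ∣ n i} = x * p ^ #{j | p ^ (s + 1) ∣ m j} := by
    rw [h0] at hpos
    apply Nat.eq_of_mul_eq_mul_right hpos
    linear_combination h1
  have hinj := Nat.pow_right_injective hp.two_le
  rcases (Nat.dvd_prime hp).mp hxp with rfl | rfl
  · have := hinj (hpow.trans (one_mul _))
    omega
  · have := hinj (hpow.trans (pow_succ' _ _).symm)
    omega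

theorem Fin.val_lt_card_filter_iff {r : ℕ} {P : Fin r → Prop} [DecidablePred P]
    (hP : ∀ i j, i ≤ j → P j → P i) (i : Fin r) : i.val < #{j | P j} ↔ P i := by
  constructor
  · contrapose!
    intro hi
    calc #{j | P j} ≤ #(Iio i) := card_le_card fun j hj =>
          mem_Iio.mpr (not_le.mp fun hij => hi (hP _ _ hij (mem_filter.mp hj).2))
      _ = i := Fin.card_Iio i
  · intro hi
    calc i.val < #(Iic i) := by rw [Fin.card_Iic]; omega
      _ ≤ #{j | P j} :=
          card_le_card fun j hj => mem_filter.mpr ⟨mem_univ j, hP _ _ (mem_Iic.mp hj) hi⟩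

def padOne {r : ℕ} (n : Fin r → ℕ) (i : ℕ) : ℕ := if h : i < r then n ⟨i, h⟩ else 1

section padOne

variable {r : ℕ} {n : Fin r → ℕ}

@[simp] theorem padOne_val (n : Fin r → ℕ) (i : Fin r) : padOne n i = n i := dif_pos i.2

theorem padOne_of_lt (n : Fin r → ℕ) {i : ℕ} (h : i < r) : padOne n i = n ⟨i, h⟩ := dif_pos h

theorem padOne_of_le (n : Fin r → ℕ) {i : ℕ} (h : r ≤ i) : padOne n i = 1 := dif_neg (by omega)

theorem padOne_pos (hn : ∀ i, 0 < n i) (i : ℕ) : 0 < padOne n i := by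
  unfold padOne
  split_ifs <;> simp [hn]

theorem one_lt_padOne_iff (hn : ∀ i, 1 < n i) (i : ℕ) : 1 < padOne n i ↔ i < r := by
  by_cases h : i < r
  · simp [padOne_of_lt n h, h, hn]
  · simp [padOne_of_le n (not_lt.mp h), h]

theorem prod_range_padOne (n : Fin r → ℕ) {L : ℕ} (hL : r ≤ L) :
    ∏ i ∈ range L, padOne n i = ∏ i, n i := by
  rw [← prod_range_mul_prod_Ico _ hL,
    prod_eq_one (s := Ico r L) fun i hi => padOne_of_le n (mem_Ico.mp hi).1, mul_one,
    ← Fin.prod_univ_eq_prod_range]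
  simp

theorem sum_range_padOne_sub_one (n : Fin r → ℕ) {L : ℕ} (hL : r ≤ L) :
    ∑ i ∈ range L, (padOne n i - 1) = ∑ i, (n i - 1) := by
  rw [← sum_range_add_sum_Ico _ hL,
    sum_eq_zero (s := Ico r L) fun i hi => by rw [padOne_of_le n (mem_Ico.mp hi).1, Nat.sub_self],
    add_zero, ← Fin.sum_univ_eq_sum_range (fun i => padOne n i - 1)]
  simp

theorem dvd_padOne_iff (hn : ∀ i j, i ≤ j → n j ∣ n i) {q : ℕ} (hq : 1 < q) (i : ℕ) :
    q ∣ padOne n i ↔ i < #{j | q ∣ n j} := by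
  by_cases hi : i < r
  · rw [padOne_of_lt n hi]
    exact (Fin.val_lt_card_filter_iff (P := fun j => q ∣ n j)
      (fun a b hab h => h.trans (hn a b hab)) ⟨i, hi⟩).symm
  · have : #{j | q ∣ n j} ≤ r := (card_filter_le _ _).trans (card_fin r).le
    rw [padOne_of_le n (by omega), Nat.dvd_one]
    omega

theorem padOne_interlace_of_card_filter {r' : ℕ} {m : Fin r' → ℕ}
    (hn : ∀ i j, i ≤ j → n j ∣ n i) (hm : ∀ i j, i ≤ j → m j ∣ m i)
    (hcount : ∀ p s, p.Prime → #{j | p ^ (s + 1) ∣ m j} ≤ #{i | p ^ (s + 1) ∣ n i} ∧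
      #{i | p ^ (s + 1) ∣ n i} ≤ #{j | p ^ (s + 1) ∣ m j} + 1) (i : ℕ) :
    padOne m i ∣ padOne n i ∧ padOne n (i + 1) ∣ padOne m i := by
  simp only [Nat.dvd_iff_prime_pow_dvd_dvd _ (padOne _ _)]
  refine ⟨fun p k hp => ?_, fun p k hp => ?_⟩ <;> rcases k with _ | s
  any_goals simp
  all_goals
    have hq : 1 < p ^ (s + 1) := Nat.one_lt_pow s.succ_ne_zero hp.one_lt
    rw [dvd_padOne_iff hn hq, dvd_padOne_iff hm hq]
    have := hcount p s hp
    omega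

end padOne

section Interlacing

variable {a n m : ℕ → ℕ}

theorem prod_range_le_of_interlace (hnm : ∀ i, n i = a i * m i) (hstep : ∀ i, n (i + 1) ≤ m i)
    {L : ℕ} (hL : n L = 1) : ∏ i ∈ range L, a i ≤ n 0 := by
  induction L generalizing a n m with
  | zero => simp [hL]
  | succ L ih =>
    rw [prod_range_succ', hnm 0, mul_comm]
    calc a 0 * ∏ i ∈ range L, a (i + 1) ≤ a 0 * n 1 :=
          Nat.mul_le_mul_left _ (ih (fun i => hnm (i + 1)) (fun i => hstep (i + 1)) hL)
      _ ≤ a 0 * m 0 := Nat.mul_le_mul_left _ (hstep 0)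

theorem interlace_eq_of_prod_range_eq (hnm : ∀ i, n i = a i * m i)
    (hstep : ∀ i, n (i + 1) ≤ m i) (hn : ∀ i, 0 < n i) {L : ℕ} (hL : n L = 1)
    (h : ∏ i ∈ range L, a i = n 0) : ∀ i < L, m i = n (i + 1) := by
  induction L generalizing a n m with
  | zero => simp
  | succ L ih =>
    rw [prod_range_succ', hnm 0, mul_comm] at h
    have hQ := prod_range_le_of_interlace (fun i => hnm (i + 1)) (fun i => hstep (i + 1)) hL
    have ha : 0 < a 0 := Nat.pos_of_mul_pos_right (hnm 0 ▸ hn 0)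
    have hQm := Nat.eq_of_mul_eq_mul_left ha h
    have hm1 : m 0 = n 1 := le_antisymm (hQm ▸ hQ) (hstep 0)
    have htail := ih (fun i => hnm (i + 1)) (fun i => hstep (i + 1)) (fun i => hn (i + 1)) hL
      (hQm.trans hm1)
    rintro (_ | i) hi
    · exact hm1
    · exact htail i (by omega)

theorem prod_range_sub_one_le_sum_sub (hnm : ∀ i, n i = a i * m i)
    (hstep : ∀ i, n (i + 1) ≤ m i) {L : ℕ} (hL : n L = 1) :
    ∏ i ∈ range L, a i - 1 ≤ ∑ i ∈ range L, (n i - m i) := by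
  induction L generalizing a n m with
  | zero => simp
  | succ L ih =>
    rw [prod_range_succ', sum_range_succ']
    set Q := ∏ i ∈ range L, a (i + 1)
    have hQ : Q ≤ m 0 := (prod_range_le_of_interlace (fun i => hnm (i + 1))
      (fun i => hstep (i + 1)) hL).trans (hstep 0)
    have htail := ih (fun i => hnm (i + 1)) (fun i => hstep (i + 1)) hL
    have hhead : (a 0 - 1) * Q ≤ n 0 - m 0 := by
      rw [hnm 0, ← Nat.sub_one_mul]
      exact Nat.mul_le_mul_left _ hQ
    rw [Nat.sub_one_mul, mul_comm] at hhead
    omega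

theorem exists_interlace_eq_of_sum_sub_eq (hnm : ∀ i, n i = a i * m i)
    (hstep : ∀ i, n (i + 1) ≤ m i) (hn : ∀ i, 0 < n i) {L : ℕ} (hL : n L = 1)
    (heq : ∑ i ∈ range L, (n i - m i) = ∏ i ∈ range L, a i - 1) (hk : 1 < ∏ i ∈ range L, a i) :
    ∃ j < L, (∀ i < j, m i = n i) ∧ ∀ i, j ≤ i → i < L → m i = n (i + 1) := by
  induction L generalizing a n m with
  | zero => simp at hk
  | succ L ih =>
    rw [prod_range_succ', sum_range_succ'] at heq
    rw [prod_range_succ'] at hk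
    set Q := ∏ i ∈ range L, a (i + 1)
    have hnm' := fun i => hnm (i + 1)
    have hstep' := fun i => hstep (i + 1)
    have hQ : Q ≤ n 1 := prod_range_le_of_interlace hnm' hstep' hL
    have htail := prod_range_sub_one_le_sum_sub hnm' hstep' hL
    have ha : 0 < a 0 := Nat.pos_of_mul_pos_right (hnm 0 ▸ hn 0)
    have hsplit : Q * a 0 = (a 0 - 1) * Q + Q := by
      rw [Nat.sub_one_mul, mul_comm, Nat.sub_add_cancel (Nat.le_mul_of_pos_left Q ha)]
    have hhead : (a 0 - 1) * Q ≤ (a 0 - 1) * m 0 := Nat.mul_le_mul_left _ (hQ.trans (hstep 0))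
    have hdiff : (a 0 - 1) * m 0 = n 0 - m 0 := by rw [hnm 0, Nat.sub_one_mul]
    rcases Nat.lt_or_ge 1 (a 0) with ha1 | ha1
    · have hQm : Q = m 0 := Nat.eq_of_mul_eq_mul_left (Nat.sub_pos_of_lt ha1) (by omega)
      have hm1 : m 0 = n 1 := le_antisymm (hQm ▸ hQ) (hstep 0)
      have hrest := interlace_eq_of_prod_range_eq hnm' hstep' (fun i => hn (i + 1)) hL
        (hQm.trans hm1)
      refine ⟨0, L.succ_pos, fun i hi => absurd hi (Nat.not_lt_zero i), ?_⟩
      rintro (_ | i) - hi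
      · exact hm1
      · exact hrest i (by omega)
    · have ha0 : a 0 = 1 := by omega
      have hmn0 : m 0 = n 0 := by rw [hnm 0, ha0, one_mul]
      rw [ha0, mul_one] at hk heq
      rw [hmn0, Nat.sub_self, add_zero] at heq
      obtain ⟨j, hj, hlt, hge⟩ := ih hnm' hstep' (fun i => hn (i + 1)) hL heq hk
      refine ⟨j + 1, by omega, ?_, ?_⟩
      · rintro (_ | i) hi
        · exact hmn0
        · exact hlt i (by omega)
      · rintro (_ | i) hji hi
        · omega
        · exact hge i (by omega) (by omega)

theorem sum_sub_one_add_le_of_interlace (hn : ∀ i, 0 < n i)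
    (hint : ∀ i, m i ∣ n i ∧ n (i + 1) ∣ m i) {L : ℕ} (hL : n L = 1) {k : ℕ}
    (hk : k * ∏ i ∈ range L, m i = ∏ i ∈ range L, n i) :
    ∑ i ∈ range L, (m i - 1) + k - 1 ≤ ∑ i ∈ range L, (n i - 1) ∧
      (∑ i ∈ range L, (n i - 1) = ∑ i ∈ range L, (m i - 1) + k - 1 → 1 < k →
        ∃ j < L, (∀ i < j, m i = n i) ∧ ∀ i, j ≤ i → i < L → m i = n (i + 1)) := by
  have hm (i : ℕ) : 0 < m i := Nat.pos_of_dvd_of_pos (hint i).1 (hn i)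
  have hnm (i : ℕ) : n i = n i / m i * m i := (Nat.div_mul_cancel (hint i).1).symm
  have hstep (i : ℕ) : n (i + 1) ≤ m i := Nat.le_of_dvd (hm i) (hint i).2
  have hprod : ∏ i ∈ range L, n i / m i = k := by
    refine Nat.eq_of_mul_eq_mul_right (prod_pos (s := range L) fun i _ => hm i) ?_
    rw [← prod_mul_distrib, hk]
    exact prod_congr rfl fun i _ => (hnm i).symm
  have hsplit : ∑ i ∈ range L, (n i - 1) =
      ∑ i ∈ range L, (m i - 1) + ∑ i ∈ range L, (n i - m i) := by
    rw [← sum_add_distrib]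
    refine sum_congr rfl fun i _ => ?_
    have := hm i
    have := Nat.le_of_dvd (hn i) (hint i).1
    omega
  have hle := prod_range_sub_one_le_sum_sub hnm hstep hL
  rw [hprod] at hle
  refine ⟨by omega, fun heq hk1 => ?_⟩
  refine exists_interlace_eq_of_sum_sub_eq hnm hstep hn hL ?_ (hprod ▸ hk1)
  rw [hprod]
  omega

end Interlacing

theorem exists_addEquiv_pi_ne_of_padOne_interlace_eq {Q : Type*} [AddCommGroup Q] {r r' : ℕ}
    {n : Fin r → ℕ} {m : Fin r' → ℕ} (hn : ∀ i, 1 < n i) (hm : ∀ i, 1 < m i)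
    (eQ : Q ≃+ ((i : Fin r') → ZMod (m i))) {j : ℕ} (hj : j < r)
    (hlt : ∀ i < j, padOne m i = padOne n i)
    (hge : ∀ i, j ≤ i → i < r → padOne m i = padOne n (i + 1)) :
    r' = r - 1 ∧ ∃ j : Fin r, Nonempty (Q ≃+ ((i : {i : Fin r // i ≠ j}) → ZMod (n i.1))) := by
  have hmn (i : ℕ) (hi : i < r - 1) : 1 < padOne m i := by
    rcases lt_or_ge i j with h | h
    · rw [hlt i h, one_lt_padOne_iff hn]; omega
    · rw [hge i h (by omega), one_lt_padOne_iff hn]; omega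
  have hlast : padOne m (r - 1) = 1 := by
    rw [hge (r - 1) (by omega) (by omega), Nat.sub_add_cancel (by omega), padOne_of_le n le_rfl]
  have hr : r' = r - 1 := by
    have h1 := (one_lt_padOne_iff hm (r - 1)).not.mp (by omega)
    by_contra h2
    have := (one_lt_padOne_iff hm r').mp (hmn r' (by omega))
    omega
  refine ⟨hr, ?_⟩
  obtain rfl : r = r' + 1 := by omega
  set J : Fin (r' + 1) := ⟨j, hj⟩
  have hsucc : m = fun b => n (J.succAbove b) := by
    funext b
    rw [← padOne_val m b, ← padOne_val n]
    rcases lt_or_ge b.val j with h | h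
    · rw [Fin.succAbove_of_castSucc_lt _ _ (Fin.lt_def.mpr (by simpa using h)), Fin.val_castSucc,
        hlt _ h]
    · rw [Fin.succAbove_of_le_castSucc _ _ (Fin.le_def.mpr (by simpa using h)), Fin.val_succ,
        hge _ h (by omega)]
  subst hsucc
  exact ⟨J, ⟨eQ.trans (RingEquiv.piCongrLeft (fun i : {i // i ≠ J} => ZMod (n i))
    (finSuccAboveEquiv J)).toAddEquiv⟩⟩

theorem dstar_quotient_cyclic_subgroup_general
    {G : Type*} [AddCommGroup G]
    (r : ℕ) (n : Fin r → ℕ)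
    (hgt : ∀ i, 1 < n i)
    (hchain : ∀ i j : Fin r, i ≤ j → n j ∣ n i)
    (hiso : Nonempty (G ≃+ ((i : Fin r) → ZMod (n i))))
    (K : AddSubgroup G) (hK : K ≠ ⊥) (hcyc : IsAddCyclic K)
    (r' : ℕ) (m : Fin r' → ℕ)
    (hgt' : ∀ i, 1 < m i)
    (hchain' : ∀ i j : Fin r', i ≤ j → m j ∣ m i)
    (hisoQ : Nonempty ((G ⧸ K) ≃+ ((i : Fin r') → ZMod (m i)))) :
    ((∑ i, (m i - 1)) + Nat.card K - 1 ≤ ∑ i, (n i - 1)) ∧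
    ((∑ i, (n i - 1)) = (∑ i, (m i - 1)) + Nat.card K - 1 →
      r' = r - 1 ∧
        ∃ j : Fin r, Nonempty ((G ⧸ K) ≃+ ((i : {i : Fin r // i ≠ j}) → ZMod (n i.1)))) := by
  obtain ⟨e⟩ := hiso
  obtain ⟨eQ⟩ := hisoQ
  have : ∀ i, NeZero (n i) := fun i => ⟨(zero_lt_one.trans (hgt i)).ne'⟩
  have : ∀ i, NeZero (m i) := fun i => ⟨(zero_lt_one.trans (hgt' i)).ne'⟩
  have : Finite G := .of_equiv _ e.symm.toEquiv
  have hint := padOne_interlace_of_card_filter hchain hchain'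
    fun p s hp => card_filter_pow_dvd_le_of_quotient e eQ hp s
  have hr' : r' ≤ r := by
    have h := (hint r).1
    rw [padOne_of_le n le_rfl, Nat.dvd_one] at h
    by_contra! hrr
    exact ((one_lt_padOne_iff hgt' r).mpr hrr).ne' h
  have hcard : Nat.card K * ∏ i ∈ range r, padOne m i = ∏ i ∈ range r, padOne n i := by
    rw [prod_range_padOne m hr', prod_range_padOne n le_rfl]
    simpa [Nat.card_congr e.toEquiv, Nat.card_congr eQ.toEquiv, Nat.card_pi, mul_comm] using
      (AddSubgroup.card_eq_card_quotient_mul_card_addSubgroup K).symm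
  rw [← sum_range_padOne_sub_one n le_rfl, ← sum_range_padOne_sub_one m hr']
  obtain ⟨hle, heq⟩ := sum_sub_one_add_le_of_interlace
    (padOne_pos fun i => zero_lt_one.trans (hgt i)) hint (padOne_of_le n le_rfl) hcard
  refine ⟨hle, fun h => ?_⟩
  obtain ⟨j, hj, hlt, hge⟩ := heq h ((AddSubgroup.one_lt_card_iff_ne_bot K).mpr hK)
  exact exists_addEquiv_pi_ne_of_padOne_interlace_eq hgt hgt' eQ hj hlt hge

/-- Let `G` be a finite abelian group of rank `r` with invariant factors
`n_1 ≥ … ≥ n_r` (all `> 1`), and let `K` be a nontrivial cyclic subgroup of `G`.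
Let `m_1 ≥ … ≥ m_{r'}` be the invariant factors of `G ⧸ K`.  Then
`d*(G) ≥ d*(G ⧸ K) + |K| - 1`; moreover equality holds only if `r' = r - 1` and
`G ⧸ K ≅ ⊕_{i ≠ j} C_{n_i}` for some `j`. -/
theorem dstar_quotient_cyclic_subgroup
    {G : Type*} [AddCommGroup G] [Fintype G]
    (r : ℕ) (n : Fin r → ℕ)
    (hgt : ∀ i, 1 < n i)
    (hchain : ∀ i j : Fin r, i ≤ j → n j ∣ n i)
    (hiso : Nonempty (G ≃+ ((i : Fin r) → ZMod (n i))))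
    (K : AddSubgroup G) (hK : K ≠ ⊥) (hcyc : IsAddCyclic K)
    (r' : ℕ) (m : Fin r' → ℕ)
    (hgt' : ∀ i, 1 < m i)
    (hchain' : ∀ i j : Fin r', i ≤ j → m j ∣ m i)
    (hisoQ : Nonempty ((G ⧸ K) ≃+ ((i : Fin r') → ZMod (m i)))) :
    ((∑ i, (m i - 1)) + Nat.card K - 1 ≤ ∑ i, (n i - 1)) ∧
    ((∑ i, (n i - 1)) = (∑ i, (m i - 1)) + Nat.card K - 1 →
      r' = r - 1 ∧
        ∃ j : Fin r, Nonempty ((G ⧸ K) ≃+ ((i : {i : Fin r // i ≠ j}) → ZMod (n i.1)))) :=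
  dstar_quotient_cyclic_subgroup_general r n hgt hchain hiso K hK hcyc r' m hgt' hchain' hisoQ
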